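/- arXiv:1512.05560 — 3 statements merged into one kernel-verified Lean document; each statement's English description precedes it below -/
import Mathlib

section
/- Let Φ : 𝔻 → ℂ^{q×q} be a q×q Carathéodory function on the open unit disk 𝔻 and let μ be its Riesz–Herglotz measure, i.e., the unique positive semidefinite q×q matrix measure on the Borel sets of the unit circle 𝕋 with Φ(z) − i·Im Φ(0) = ∫_𝕋 (ζ+z)/(ζ−z) μ(dζ) for all z ∈ 𝔻. Then for each z ∈ 𝔻, the range of Re Φ(z) equals the range of μ(𝕋), and the null space of Re Φ(z) equals the null space of μ(𝕋). -/
open Matrix MeasureTheory Metric Filter Topology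
open scoped ComplexOrder

/-!
Adding the Herglotz representation of `Φ(z)` to its adjoint cancels the skew-Hermitian
constant, so `Re Φ(z) = ∫ P(ζ, z) μ(dζ)` with the Poisson kernel `P = Re ((ζ + z)/(ζ - z)) > 0`.
For a positive semidefinite matrix `A`, `A v = 0` iff `v* A v = 0`; applied to the integral of
an a.e. positive semidefinite density this gives: `v` lies in the kernel iff the density
annihilates `v` almost everywhere. That condition does not see a strictly positive weight, so
`Re Φ(z)` and `μ(𝕋)` have the same kernel, and, being Hermitian, the same range.
-/

theorem LinearMap.IsSymmetric.range_eq_orthogonal_ker {𝕜 E : Type*} [RCLike 𝕜]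
    [NormedAddCommGroup E] [InnerProductSpace 𝕜 E] [FiniteDimensional 𝕜 E]
    {T : E →ₗ[𝕜] E} (hT : T.IsSymmetric) : LinearMap.range T = (LinearMap.ker T)ᗮ := by
  rw [LinearMap.orthogonal_ker, hT.adjoint_eq]

theorem Matrix.IsHermitian.range_mulVecLin_eq_of_ker_eq {n 𝕜 : Type*} [Fintype n] [RCLike 𝕜]
    {A B : Matrix n n 𝕜} (hA : A.IsHermitian) (hB : B.IsHermitian)
    (h : LinearMap.ker A.mulVecLin = LinearMap.ker B.mulVecLin) :
    LinearMap.range A.mulVecLin = LinearMap.range B.mulVecLin := by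
  classical
  let e : EuclideanSpace 𝕜 n ≃ₗ[𝕜] (n → 𝕜) := WithLp.linearEquiv 2 𝕜 (n → 𝕜)
  have range_eq {C : Matrix n n 𝕜} (hC : C.IsHermitian) :
      (LinearMap.range C.mulVecLin).map e.symm.toLinearMap =
        ((LinearMap.ker C.mulVecLin).comap e.toLinearMap)ᗮ := by
    have hT : toEuclideanLin C = e.symm.toLinearMap ∘ₗ C.mulVecLin ∘ₗ e.toLinearMap := rfl
    have := (isSymmetric_toEuclideanLin_iff.mpr hC).range_eq_orthogonal_ker
    rwa [hT, LinearEquiv.ker_comp, LinearMap.ker_comp, LinearMap.range_comp,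
      LinearMap.range_comp, LinearEquiv.range, Submodule.map_top] at this
  apply Submodule.map_injective_of_injective e.symm.injective
  rw [range_eq hA, range_eq hB, h]

section Integral

variable {α 𝕜 : Type*} [MeasurableSpace α] {ν : Measure α} [RCLike 𝕜]

theorem RCLike.integral_eq_zero_iff_of_nonneg_ae {f : α → 𝕜} (hf : 0 ≤ᵐ[ν] f)
    (hfi : Integrable f ν) : ∫ x, f x ∂ν = 0 ↔ f =ᵐ[ν] 0 := by
  have hnorm : (fun x => (‖f x‖ : 𝕜)) =ᵐ[ν] f := hf.mono fun x hx => RCLike.norm_of_nonneg' hx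
  rw [← integral_congr_ae hnorm, integral_ofReal, RCLike.ofReal_eq_zero,
    integral_eq_zero_iff_of_nonneg (fun x => norm_nonneg _) hfi.norm]
  exact eventually_congr (ae_of_all _ fun x => norm_eq_zero)

namespace Matrix

variable {n : Type*}

open ComplexConjugate in
theorem half_smul_add_conjTranspose_eq_integral_re_mul {F C : Matrix n n 𝕜} {k : α → 𝕜}
    {g : α → Matrix n n 𝕜} (hF : ∀ i j, F i j - C i j = ∫ x, k x * g x i j ∂ν) (hC : Cᴴ = -C)
    (hherm : ∀ᵐ x ∂ν, (g x).IsHermitian) (hkg : ∀ i j, Integrable (fun x => k x * g x i j) ν) :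
    (1 / 2 : 𝕜) • (F + Fᴴ) = of fun i j => ∫ x, (RCLike.re (k x) : 𝕜) * g x i j ∂ν := by
  ext i j
  have hconj : (fun x => conj (k x * g x j i)) =ᵐ[ν] fun x => conj (k x) * g x i j :=
    hherm.mono fun x hx => by dsimp only; rw [map_mul, ← hx.apply i j, RCLike.star_def]
  have hconj_int : Integrable (fun x => conj (k x) * g x i j) ν :=
    ((LinearIsometryEquiv.integrable_comp_iff RCLike.conjLIE).mpr (hkg j i)).congr hconj
  have hstarF : star (F j i) = -C i j + ∫ x, conj (k x) * g x i j ∂ν := by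
    rw [eq_add_of_sub_eq' (hF j i), star_add, ← conjTranspose_apply, hC, RCLike.star_def,
      ← integral_conj, integral_congr_ae hconj, neg_apply]
  simp only [smul_apply, add_apply, conjTranspose_apply, of_apply, smul_eq_mul,
    eq_add_of_sub_eq' (hF i j), hstarF]
  rw [add_add_add_comm, add_neg_cancel, zero_add, ← integral_add (hkg i j) hconj_int,
    ← integral_const_mul]
  congr 1 with x
  rw [← add_mul, RCLike.add_conj]
  ring

variable [Fintype n] {g : α → Matrix n n 𝕜}

theorem integrable_dotProduct_mulVec (hg : ∀ i j, Integrable (fun x => g x i j) ν)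
    (u v : n → 𝕜) : Integrable (fun x => u ⬝ᵥ g x *ᵥ v) ν := by
  simp only [dotProduct, mulVec]
  exact integrable_finsetSum _ fun i _ =>
    (integrable_finsetSum _ fun j _ => (hg i j).mul_const _).const_mul _

theorem dotProduct_mulVec_integral (hg : ∀ i j, Integrable (fun x => g x i j) ν)
    (u v : n → 𝕜) :
    u ⬝ᵥ (of fun i j => ∫ x, g x i j ∂ν) *ᵥ v = ∫ x, u ⬝ᵥ g x *ᵥ v ∂ν := by
  simp only [dotProduct, mulVec, of_apply, Finset.mul_sum]
  rw [integral_finsetSum _ fun i _ => integrable_finsetSum _ fun j _ =>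
    ((hg i j).mul_const _).const_mul _]
  refine Finset.sum_congr rfl fun i _ => ?_
  rw [integral_finsetSum _ fun j _ => ((hg i j).mul_const _).const_mul _]
  simp only [integral_const_mul, integral_mul_const]

theorem posSemidef_integral (hg : ∀ i j, Integrable (fun x => g x i j) ν)
    (hpsd : ∀ᵐ x ∂ν, (g x).PosSemidef) : (of fun i j => ∫ x, g x i j ∂ν).PosSemidef := by
  refine .of_dotProduct_mulVec_nonneg ?_ fun v => ?_
  · ext i j
    simp only [conjTranspose_apply, of_apply, RCLike.star_def, ← integral_conj]
    exact integral_congr_ae (hpsd.mono fun x hx => hx.1.apply i j)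
  · rw [dotProduct_mulVec_integral hg]
    exact integral_nonneg_of_ae (hpsd.mono fun x hx => hx.dotProduct_mulVec_nonneg v)

theorem mem_ker_integral_iff (hg : ∀ i j, Integrable (fun x => g x i j) ν)
    (hpsd : ∀ᵐ x ∂ν, (g x).PosSemidef) (v : n → 𝕜) :
    v ∈ LinearMap.ker (of fun i j => ∫ x, g x i j ∂ν).mulVecLin ↔ ∀ᵐ x ∂ν, g x *ᵥ v = 0 := by
  rw [LinearMap.mem_ker, mulVecLin_apply,
    ← (posSemidef_integral hg hpsd).dotProduct_mulVec_zero_iff, dotProduct_mulVec_integral hg,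
    RCLike.integral_eq_zero_iff_of_nonneg_ae
      (hpsd.mono fun x hx => hx.dotProduct_mulVec_nonneg v) (integrable_dotProduct_mulVec hg _ _)]
  exact eventually_congr (hpsd.mono fun x hx => hx.dotProduct_mulVec_zero_iff v)

theorem ker_integral_weighted_eq {w : α → ℝ} (hg : ∀ i j, Integrable (fun x => g x i j) ν)
    (hpsd : ∀ᵐ x ∂ν, (g x).PosSemidef) (hw : ∀ᵐ x ∂ν, 0 < w x)
    (hwg : ∀ i j, Integrable (fun x => (w x : 𝕜) * g x i j) ν) :
    LinearMap.ker (of fun i j => ∫ x, (w x : 𝕜) * g x i j ∂ν).mulVecLin =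
      LinearMap.ker (of fun i j => ∫ x, g x i j ∂ν).mulVecLin := by
  have hwpsd : ∀ᵐ x ∂ν, ((w x : 𝕜) • g x).PosSemidef := by
    filter_upwards [hpsd, hw] with x hx hwx
    exact hx.smul (RCLike.ofReal_nonneg.mpr hwx.le)
  ext v
  refine (mem_ker_integral_iff (g := fun x => (w x : 𝕜) • g x) hwg hwpsd v).trans ?_
  rw [mem_ker_integral_iff hg hpsd]
  refine eventually_congr (hw.mono fun x hwx => ?_)
  rw [smul_mulVec, smul_eq_zero, RCLike.ofReal_eq_zero, or_iff_right hwx.ne']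

end Matrix

end Integral

noncomputable def herglotzKernel (ζ z : ℂ) : ℂ := (ζ + z) / (ζ - z)

theorem re_herglotzKernel {ζ z : ℂ} (hζ : ‖ζ‖ = 1) :
    (herglotzKernel ζ z).re = (1 - ‖z‖ ^ 2) / ‖ζ - z‖ ^ 2 := by
  have hζ' : Complex.normSq ζ = 1 := by rw [← Complex.sq_norm, hζ, one_pow]
  rw [herglotzKernel, Complex.div_re, ← add_div, Complex.sq_norm, Complex.sq_norm, ← hζ']
  congr 1
  simp only [Complex.normSq_apply, Complex.add_re, Complex.add_im, Complex.sub_re, Complex.sub_im]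
  ring

theorem re_herglotzKernel_pos {ζ z : ℂ} (hζ : ‖ζ‖ = 1) (hz : ‖z‖ < 1) :
    0 < (herglotzKernel ζ z).re := by
  have hζz : ζ - z ≠ 0 := sub_ne_zero.mpr fun h => by rw [h] at hζ; linarith
  have hz2 : ‖z‖ ^ 2 < 1 := by nlinarith [norm_nonneg z]
  rw [re_herglotzKernel hζ]
  exact div_pos (sub_pos.mpr hz2) (pow_pos (norm_pos_iff.mpr hζz) 2)

theorem norm_herglotzKernel_le {ζ z : ℂ} (hζ : ‖ζ‖ = 1) (hz : ‖z‖ < 1) :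
    ‖herglotzKernel ζ z‖ ≤ 2 / (1 - ‖z‖) := by
  have hnum : ‖ζ + z‖ ≤ 2 := by linarith [norm_add_le ζ z]
  have hden : 1 - ‖z‖ ≤ ‖ζ - z‖ := by linarith [norm_sub_norm_le ζ z]
  rw [herglotzKernel, norm_div]
  exact div_le_div₀ zero_le_two hnum (by linarith) hden

theorem measurable_herglotzKernel (z : ℂ) : Measurable fun ζ => herglotzKernel ζ z := by
  unfold herglotzKernel
  fun_prop

theorem range_re_caratheodory_eq_range_total_mass_general (q : ℕ)
    (Φ : ℂ → Matrix (Fin q) (Fin q) ℂ)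
    (ν : Measure ℂ) (hν : ν ((sphere (0 : ℂ) 1)ᶜ) = 0)
    (g : ℂ → Matrix (Fin q) (Fin q) ℂ)
    (hg : ∀ a b, Integrable (fun z => g z a b) ν)
    (hpsd : ∀ᵐ z ∂ν, (g z).PosSemidef)
    (hRH : ∀ z ∈ ball (0 : ℂ) 1, ∀ a b,
      Φ z a b - (1 / 2 : ℂ) * (Φ 0 a b - (starRingEnd ℂ) (Φ 0 b a)) =
        ∫ ζ, ((ζ + z) / (ζ - z)) * g ζ a b ∂ν) :
    ∀ z ∈ ball (0 : ℂ) 1,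
      LinearMap.range ((1 / 2 : ℂ) • (Φ z + (Φ z)ᴴ)).mulVecLin =
          LinearMap.range (Matrix.of fun a b => ∫ ζ, g ζ a b ∂ν).mulVecLin ∧
        LinearMap.ker ((1 / 2 : ℂ) • (Φ z + (Φ z)ᴴ)).mulVecLin =
          LinearMap.ker (Matrix.of fun a b => ∫ ζ, g ζ a b ∂ν).mulVecLin := by
  intro z hz
  have hz1 : ‖z‖ < 1 := mem_ball_zero_iff.mp hz
  have hsphere : ∀ᵐ ζ ∂ν, ‖ζ‖ = 1 := by
    filter_upwards [mem_ae_iff.mpr hν] with ζ hζ using mem_sphere_zero_iff_norm.mp hζ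
  have hk_bdd : ∀ᵐ ζ ∂ν, ‖herglotzKernel ζ z‖ ≤ 2 / (1 - ‖z‖) :=
    hsphere.mono fun ζ hζ => norm_herglotzKernel_le hζ hz1
  have hk_meas : Measurable fun ζ => herglotzKernel ζ z := measurable_herglotzKernel z
  have hkg a b : Integrable (fun ζ => herglotzKernel ζ z * g ζ a b) ν :=
    (hg a b).bdd_mul hk_meas.aestronglyMeasurable hk_bdd
  have hwg a b : Integrable (fun ζ => ((herglotzKernel ζ z).re : ℂ) * g ζ a b) ν :=
    (hg a b).bdd_mul (by fun_prop) <| hk_bdd.mono fun ζ h => by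
      rw [Complex.norm_real, Real.norm_eq_abs]
      exact (Complex.abs_re_le_norm _).trans h
  have hRe : (1 / 2 : ℂ) • (Φ z + (Φ z)ᴴ) =
      of fun a b => ∫ ζ, ((herglotzKernel ζ z).re : ℂ) * g ζ a b ∂ν :=
    half_smul_add_conjTranspose_eq_integral_re_mul (C := (1 / 2 : ℂ) • (Φ 0 - (Φ 0)ᴴ))
      (hRH z hz) (by simp [conjTranspose_smul, smul_sub]) (hpsd.mono fun _ h => h.1) hkg
  have hker := hRe ▸ ker_integral_weighted_eq hg hpsd
    (hsphere.mono fun ζ hζ => re_herglotzKernel_pos hζ hz1) hwg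
  have hherm : ((1 / 2 : ℂ) • (Φ z + (Φ z)ᴴ)).IsHermitian := by
    simp [IsHermitian, conjTranspose_smul, add_comm]
  exact ⟨hherm.range_mulVecLin_eq_of_ker_eq (posSemidef_integral hg hpsd).isHermitian hker, hker⟩

/-- Let `Φ` be a `q×q` Carathéodory function on the unit disk with Riesz–Herglotz
measure `μ` (encoded by a finite positive measure `ν` supported on the unit circle
and a `ν`-a.e. positive semidefinite integrable matrix density `g`). Then for each
`z` in the disk, the range of `Re Φ(z)` equals the range of `μ(𝕋)` and the null
space of `Re Φ(z)` equals the null space of `μ(𝕋)`. -/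
theorem range_re_caratheodory_eq_range_total_mass (q : ℕ)
    (Φ : ℂ → Matrix (Fin q) (Fin q) ℂ)
    (hdiff : ∀ a b, DifferentiableOn ℂ (fun z => Φ z a b) (ball (0 : ℂ) 1))
    (hre : ∀ z ∈ ball (0 : ℂ) 1, ((1 / 2 : ℂ) • (Φ z + (Φ z)ᴴ)).PosSemidef)
    (ν : Measure ℂ) [IsFiniteMeasure ν] (hν : ν ((sphere (0 : ℂ) 1)ᶜ) = 0)
    (g : ℂ → Matrix (Fin q) (Fin q) ℂ)
    (hg : ∀ a b, Integrable (fun z => g z a b) ν)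
    (hpsd : ∀ᵐ z ∂ν, (g z).PosSemidef)
    (hRH : ∀ z ∈ ball (0 : ℂ) 1, ∀ a b,
      Φ z a b - (1 / 2 : ℂ) * (Φ 0 a b - (starRingEnd ℂ) (Φ 0 b a)) =
        ∫ ζ, ((ζ + z) / (ζ - z)) * g ζ a b ∂ν) :
    ∀ z ∈ ball (0 : ℂ) 1,
      LinearMap.range ((1 / 2 : ℂ) • (Φ z + (Φ z)ᴴ)).mulVecLin =
          LinearMap.range (Matrix.of fun a b => ∫ ζ, g ζ a b ∂ν).mulVecLin ∧
        LinearMap.ker ((1 / 2 : ℂ) • (Φ z + (Φ z)ᴴ)).mulVecLin =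
          LinearMap.ker (Matrix.of fun a b => ∫ ζ, g ζ a b ∂ν).mulVecLin :=
  range_re_caratheodory_eq_range_total_mass_general q Φ ν hν g hg hpsd hRH
end

section
/- Let D be a region of ℂ containing the closed disk of radius r > 1 about 0, and let F be a q×q matrix-valued function meromorphic in D whose restriction Φ to the open unit disk 𝔻 is a Carathéodory function with Riesz–Herglotz measure μ. If u ∈ 𝕋 is a pole of F, then u is a simple pole, the residue of F at u equals −2u·μ({u}), and lim_{r→1⁻} (ru − u) F(ru) = −2u·μ({u}). -/
open Matrix MeasureTheory Metric Filter Topology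
open scoped ComplexOrder

/-!
For `t ∈ (0, 1)` the Riesz–Herglotz formula writes `(tu - u) Φ(tu)` as a term that vanishes as
`t → 1` plus the integral of `g` against the kernel `(tu - u)(ζ + tu)/(ζ - tu)`. On the unit circle
this kernel is bounded by `2` and tends to `-2u` at `ζ = u` and to `0` elsewhere, so dominated
convergence gives the radial limit `-2u μ({u})`.
Each entry `(z - u) F(z)` is meromorphic at `u` and has a finite limit along the radius, so it has
no pole at `u`: `F` has at most a simple pole at `u`, and `(z - u) F(z)` tends to the radial limit.
-/

section Meromorphic

variable {𝕜 : Type*} [NontriviallyNormedField 𝕜] {E : Type*} [NormedAddCommGroup E]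
  [NormedSpace 𝕜 E] {f : 𝕜 → E} {x : 𝕜}

theorem MeromorphicAt.meromorphicOrderAt_sub_smul (hf : MeromorphicAt f x) :
    meromorphicOrderAt (fun z ↦ (z - x) • f z) x = meromorphicOrderAt f x + 1 := by
  rw [← meromorphicOrderAt_id_sub_const (x := x), add_comm]
  exact meromorphicOrderAt_smul (by fun_prop) hf

theorem MeromorphicAt.tendsto_nhdsNE_of_tendsto (hf : MeromorphicAt f x) {l : Filter 𝕜}
    [l.NeBot] (hl : l ≤ 𝓝[≠] x) {c : E} (hc : Tendsto f l (𝓝 c)) :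
    0 ≤ meromorphicOrderAt f x ∧ Tendsto f (𝓝[≠] x) (𝓝 c) := by
  have ho : 0 ≤ meromorphicOrderAt f x := by
    by_contra! ho
    refine not_tendsto_atTop_of_tendsto_nhds hc.norm ?_
    rw [tendsto_norm_atTop_iff_cobounded]
    exact (tendsto_cobounded_of_meromorphicOrderAt_neg ho).mono_left hl
  obtain ⟨c', hc'⟩ := tendsto_nhds_of_meromorphicOrderAt_nonneg hf ho
  exact ⟨ho, tendsto_nhds_unique (hc'.mono_left hl) hc ▸ hc'⟩

theorem MeromorphicAt.tendsto_sub_smul_nhdsNE_of_tendsto (hf : MeromorphicAt f x) {l : Filter 𝕜}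
    [l.NeBot] (hl : l ≤ 𝓝[≠] x) {c : E} (hc : Tendsto (fun z ↦ (z - x) • f z) l (𝓝 c)) :
    ((-1 : ℤ) : WithTop ℤ) ≤ meromorphicOrderAt f x ∧
      Tendsto (fun z ↦ (z - x) • f z) (𝓝[≠] x) (𝓝 c) := by
  have hsmul : MeromorphicAt (fun z ↦ (z - x) • f z) x :=
    (by fun_prop : MeromorphicAt (· - x) x).smul hf
  obtain ⟨ho, hlim⟩ := hsmul.tendsto_nhdsNE_of_tendsto hl hc
  refine ⟨?_, hlim⟩
  rw [hf.meromorphicOrderAt_sub_smul] at ho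
  cases h : meromorphicOrderAt f x with
  | top => simp
  | coe n =>
    rw [h] at ho
    have : (0 : ℤ) ≤ n + 1 := by exact_mod_cast ho
    exact WithTop.coe_le_coe.mpr (by omega)

end Meromorphic

section RadialLimit

variable {u : ℂ}

theorem tendsto_ofReal_mul_nhdsNE (hu : u ≠ 0) :
    Tendsto (fun t : ℝ ↦ (t : ℂ) * u) (𝓝[<] 1) (𝓝[≠] u) := by
  refine tendsto_nhdsWithin_of_tendsto_nhds_of_eventually_within _ ?_ ?_
  · have : Continuous (fun t : ℝ ↦ (t : ℂ) * u) := by fun_prop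
    simpa using (this.tendsto 1).mono_left nhdsWithin_le_nhds
  · filter_upwards [self_mem_nhdsWithin] with t (ht : t < 1)
    simpa [hu] using ht.ne

theorem norm_ofReal_mul_sub_self (hu : ‖u‖ = 1) (t : ℝ) : ‖(t : ℂ) * u - u‖ = |t - 1| := by
  rw [← sub_one_mul, norm_mul, hu, mul_one, ← Complex.ofReal_one, ← Complex.ofReal_sub,
    Complex.norm_real, Real.norm_eq_abs]

theorem norm_ofReal_mul_sub_self_mul_herglotzKernel_le {ζ : ℂ} (hζ : ‖ζ‖ = 1) (hu : ‖u‖ = 1)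
    {t : ℝ} (ht₀ : 0 ≤ t) (ht₁ : t < 1) :
    ‖((t : ℂ) * u - u) * ((ζ + t * u) / (ζ - t * u))‖ ≤ 2 := by
  have htu : ‖(t : ℂ) * u‖ = t := by simp [hu, abs_of_nonneg ht₀]
  have hnum : ‖ζ + t * u‖ ≤ 1 + t := (norm_add_le _ _).trans_eq (by rw [hζ, htu])
  have hden : 1 - t ≤ ‖ζ - t * u‖ := (norm_sub_norm_le _ _).trans_eq' (by rw [hζ, htu])
  rw [norm_mul, norm_div, norm_ofReal_mul_sub_self hu, abs_of_neg (by linarith), mul_div_assoc',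
    div_le_iff₀ (by linarith)]
  nlinarith

theorem tendsto_ofReal_mul_sub_self_mul_herglotzKernel (hu : u ≠ 0) (ζ : ℂ) :
    Tendsto (fun t : ℝ ↦ ((t : ℂ) * u - u) * ((ζ + t * u) / (ζ - t * u))) (𝓝[<] 1)
      (𝓝 (({u} : Set ℂ).indicator (fun _ ↦ -2 * u) ζ)) := by
  by_cases hζ : ζ = u
  · subst hζ
    rw [Set.indicator_of_mem (Set.mem_singleton ζ)]
    have hlim : Tendsto (fun t : ℝ ↦ -(1 + (t : ℂ)) * ζ) (𝓝[<] 1) (𝓝 (-2 * ζ)) := by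
      have : Continuous (fun t : ℝ ↦ -(1 + (t : ℂ)) * ζ) := by fun_prop
      convert (this.tendsto 1).mono_left nhdsWithin_le_nhds using 2
      push_cast
      ring
    refine hlim.congr' ?_
    filter_upwards [self_mem_nhdsWithin] with t (ht : t < 1)
    have : (1 - t : ℂ) ≠ 0 := by exact_mod_cast (sub_pos.mpr ht).ne'
    field_simp
    ring
  · rw [Set.indicator_of_notMem (by simpa using hζ)]
    have hden : ζ - ((1 : ℝ) : ℂ) * u ≠ 0 := by simpa [sub_eq_zero] using hζ
    have : ContinuousAt (fun t : ℝ ↦ ((t : ℂ) * u - u) * ((ζ + t * u) / (ζ - t * u))) 1 :=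
      by fun_prop (disch := exact hden)
    simpa using this.tendsto.mono_left nhdsWithin_le_nhds

theorem tendsto_ofReal_mul_sub_self_mul_herglotz_integral {ν : Measure ℂ}
    (hν : ∀ᵐ ζ ∂ν, ‖ζ‖ = 1) {G : ℂ → ℂ} (hG : Integrable G ν) (hu : ‖u‖ = 1) :
    Tendsto (fun t : ℝ ↦ ((t : ℂ) * u - u) * ∫ ζ, (ζ + t * u) / (ζ - t * u) * G ζ ∂ν)
      (𝓝[<] 1) (𝓝 (-2 * u * ∫ ζ in {u}, G ζ ∂ν)) := by
  have hu₀ : u ≠ 0 := by rintro rfl; simp at hu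
  simp_rw [← integral_const_mul, ← mul_assoc]
  rw [← integral_indicator (measurableSet_singleton u)]
  simp_rw [Set.indicator_mul_left _ (fun _ ↦ -2 * u)]
  refine tendsto_integral_filter_of_dominated_convergence (fun ζ ↦ 2 * ‖G ζ‖) ?_ ?_
    (hG.norm.const_mul 2) (.of_forall fun ζ ↦
      (tendsto_ofReal_mul_sub_self_mul_herglotzKernel hu₀ ζ).mul_const (G ζ))
  · refine .of_forall fun t ↦ .mul ?_ hG.aestronglyMeasurable
    exact Measurable.aestronglyMeasurable (by fun_prop)
  · filter_upwards [Ioo_mem_nhdsLT zero_lt_one] with t ht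
    filter_upwards [hν] with ζ hζ
    rw [norm_mul]
    exact mul_le_mul_of_nonneg_right
      (norm_ofReal_mul_sub_self_mul_herglotzKernel_le hζ hu ht.1.le ht.2) (norm_nonneg _)

theorem tendsto_ofReal_mul_sub_self_mul_of_sub_eq_herglotz_integral {ν : Measure ℂ}
    (hν : ∀ᵐ ζ ∂ν, ‖ζ‖ = 1) {G : ℂ → ℂ} (hG : Integrable G ν) (hu : ‖u‖ = 1)
    {H : ℂ → ℂ} {c : ℂ}
    (hH : ∀ z ∈ ball (0 : ℂ) 1, H z - c = ∫ ζ, (ζ + z) / (ζ - z) * G ζ ∂ν) :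
    Tendsto (fun t : ℝ ↦ ((t : ℂ) * u - u) * H (t * u)) (𝓝[<] 1)
      (𝓝 (-2 * u * ∫ ζ in {u}, G ζ ∂ν)) := by
  have hc : Tendsto (fun t : ℝ ↦ ((t : ℂ) * u - u) * c) (𝓝[<] 1) (𝓝 0) := by
    have : Continuous (fun t : ℝ ↦ ((t : ℂ) * u - u) * c) := by fun_prop
    simpa using (this.tendsto 1).mono_left nhdsWithin_le_nhds
  refine (zero_add (-2 * u * ∫ ζ in {u}, G ζ ∂ν) ▸
    hc.add (tendsto_ofReal_mul_sub_self_mul_herglotz_integral hν hG hu)).congr' ?_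
  filter_upwards [Ioo_mem_nhdsLT zero_lt_one] with t ht
  have htu : (t : ℂ) * u ∈ ball (0 : ℂ) 1 := by simp [hu, abs_of_pos ht.1, ht.2]
  rw [← mul_add, ← hH _ htu, add_sub_cancel]

end RadialLimit

theorem simple_pole_and_residue_general (q : ℕ) (r : ℝ) (hr : 1 < r)
    (D : Set ℂ)
    (hball : closedBall (0 : ℂ) r ⊆ D)
    (F : ℂ → Matrix (Fin q) (Fin q) ℂ)
    (hmer : ∀ z ∈ D, ∀ a b, MeromorphicAt (fun ζ => F ζ a b) z)
    (ν : Measure ℂ) (hν : ν ((sphere (0 : ℂ) 1)ᶜ) = 0)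
    (g : ℂ → Matrix (Fin q) (Fin q) ℂ)
    (hg : ∀ a b, Integrable (fun z => g z a b) ν)
    (hRH : ∀ z ∈ ball (0 : ℂ) 1, ∀ a b,
      F z a b - (1 / 2 : ℂ) * (F 0 a b - (starRingEnd ℂ) (F 0 b a)) =
        ∫ ζ, ((ζ + z) / (ζ - z)) * g ζ a b ∂ν)
    (u : ℂ) (hu : u ∈ sphere (0 : ℂ) 1) :
    (∀ a b, ∀ h : MeromorphicAt (fun ζ => F ζ a b) u,
        ((-1 : ℤ) : WithTop ℤ) ≤ meromorphicOrderAt (fun ζ => F ζ a b) u) ∧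
    (∀ a b, Tendsto (fun z => (z - u) * F z a b) (nhdsWithin u {u}ᶜ)
        (nhds (-2 * u * ∫ ζ in {u}, g ζ a b ∂ν))) ∧
    (∀ a b, Tendsto (fun t : ℝ => ((t : ℂ) * u - u) * F ((t : ℂ) * u) a b)
        (nhdsWithin (1 : ℝ) (Set.Iio 1))
        (nhds (-2 * u * ∫ ζ in {u}, g ζ a b ∂ν))) := by
  have hu₁ : ‖u‖ = 1 := by simpa using hu
  have hu₀ : u ≠ 0 := by rintro rfl; simp at hu₁
  have hν₁ : ∀ᵐ ζ ∂ν, ‖ζ‖ = 1 := (ae_iff.mpr hν).mono fun ζ hζ ↦ by simpa using hζ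
  have hradial : ∀ a b, Tendsto (fun t : ℝ ↦ ((t : ℂ) * u - u) * F ((t : ℂ) * u) a b)
      (𝓝[<] 1) (𝓝 (-2 * u * ∫ ζ in {u}, g ζ a b ∂ν)) := fun a b ↦
    tendsto_ofReal_mul_sub_self_mul_of_sub_eq_herglotz_integral hν₁ (hg a b) hu₁ (hRH · · a b)
  have huD : u ∈ D := hball (by simp [hu₁, hr.le])
  have hresidue := fun a b ↦ (hmer u huD a b).tendsto_sub_smul_nhdsNE_of_tendsto
    (tendsto_ofReal_mul_nhdsNE hu₀) (tendsto_map'_iff.mpr (hradial a b))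
  exact ⟨fun a b _ ↦ (hresidue a b).1, fun a b ↦ (hresidue a b).2, hradial⟩

/-- Let `F` be meromorphic on a region containing the closed disk of some radius
`r > 1`, whose restriction to the unit disk is a Carathéodory function with
Riesz–Herglotz measure `μ` (encoded by a finite positive measure `ν` supported on
the unit circle and a `ν`-a.e. positive semidefinite integrable matrix density `g`).
If `u` on the unit circle is a pole of `F`, then it is a simple pole (all entries
have meromorphic order `≥ -1`), the residue of `F` at `u` is `-2u·μ({u})`, i.e.
`(z-u)F(z) → -2u·μ({u})` as `z → u`, and `lim_{r→1⁻} (ru-u)F(ru) = -2u·μ({u})`. -/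
theorem simple_pole_and_residue (q : ℕ) (r : ℝ) (hr : 1 < r)
    (D : Set ℂ) (hD : IsOpen D) (hDc : IsConnected D)
    (hball : closedBall (0 : ℂ) r ⊆ D)
    (F : ℂ → Matrix (Fin q) (Fin q) ℂ)
    (hmer : ∀ z ∈ D, ∀ a b, MeromorphicAt (fun ζ => F ζ a b) z)
    (hdiff : ∀ a b, DifferentiableOn ℂ (fun z => F z a b) (ball (0 : ℂ) 1))
    (hre : ∀ z ∈ ball (0 : ℂ) 1, ((1 / 2 : ℂ) • (F z + (F z)ᴴ)).PosSemidef)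
    (ν : Measure ℂ) [IsFiniteMeasure ν] (hν : ν ((sphere (0 : ℂ) 1)ᶜ) = 0)
    (g : ℂ → Matrix (Fin q) (Fin q) ℂ)
    (hg : ∀ a b, Integrable (fun z => g z a b) ν)
    (hpsd : ∀ᵐ z ∂ν, (g z).PosSemidef)
    (hRH : ∀ z ∈ ball (0 : ℂ) 1, ∀ a b,
      F z a b - (1 / 2 : ℂ) * (F 0 a b - (starRingEnd ℂ) (F 0 b a)) =
        ∫ ζ, ((ζ + z) / (ζ - z)) * g ζ a b ∂ν)
    (u : ℂ) (hu : u ∈ sphere (0 : ℂ) 1)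
    (hpole : ∃ a b, ∀ h : MeromorphicAt (fun ζ => F ζ a b) u, meromorphicOrderAt (fun ζ => F ζ a b) u < 0) :
    (∀ a b, ∀ h : MeromorphicAt (fun ζ => F ζ a b) u,
        ((-1 : ℤ) : WithTop ℤ) ≤ meromorphicOrderAt (fun ζ => F ζ a b) u) ∧
    (∀ a b, Tendsto (fun z => (z - u) * F z a b) (nhdsWithin u {u}ᶜ)
        (nhds (-2 * u * ∫ ζ in {u}, g ζ a b ∂ν))) ∧
    (∀ a b, Tendsto (fun t : ℝ => ((t : ℂ) * u - u) * F ((t : ℂ) * u) a b)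
        (nhdsWithin (1 : ℝ) (Set.Iio 1))
        (nhds (-2 * u * ∫ ζ in {u}, g ζ a b ∂ν))) :=
  simple_pole_and_residue_general q r hr D hball F hmer ν hν g hg hRH u hu
end

section
/- Let κ ≥ 1, let (C_j)_{j=0}^{κ} be a sequence of complex q×q matrices that is central of order k (with 1 ≤ k ≤ κ), and let (D_j)_{j=0}^{κ} be a sequence of complex p×p matrices that is central of order ℓ (with 1 ≤ ℓ ≤ κ). Then the sequence of block diagonal matrices (diag[C_j, D_j])_{j=0}^{κ} is central of order max{k, ℓ}. -/
/-!
The Moore–Penrose inverse of a block diagonal matrix is the block diagonal matrix of the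
Moore–Penrose inverses, because the latter satisfies the four Penrose equations and their
solution is unique. After regrouping the index `(ι ⊕ ι') × Fin n` as `ι × Fin n ⊕ ι' × Fin n`,
the matrices `T_n`, `Y_m`, `Z_m` of the block diagonal sequence are block diagonal, hence so
is every `M_j`, with blocks `M_j` of `C` and of `D`.

Existence of the Moore–Penrose inverse: for a Hermitian `H` it is `f(H)` with `f x = x⁻¹`
(so `f 0 = 0`), and in general `(Aᴴ A)⁺ Aᴴ` is one.
-/

open Matrix
open scoped ComplexOrder

/-- The block Toeplitz matrix `T_n = [C_{j-k}]_{j,k=0}^n`, with `C_{-j} := C_jᴴ`,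
indexed so that block `(j,k)` sits at `((a,j),(b,k))`. -/
def blockToeplitz {ι : Type*} (C : ℕ → Matrix ι ι ℂ) (n : ℕ) :
    Matrix (ι × Fin (n + 1)) (ι × Fin (n + 1)) ℂ :=
  fun x y =>
    if (y.2 : ℕ) ≤ (x.2 : ℕ) then C ((x.2 : ℕ) - (y.2 : ℕ)) x.1 y.1
    else (C ((y.2 : ℕ) - (x.2 : ℕ)))ᴴ x.1 y.1

/-- A sequence `(C_j)_{j=0}^κ` is Toeplitz nonnegative definite if each block
Toeplitz matrix `T_n`, `n ≤ κ`, is positive semidefinite. -/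
def IsTNND {ι : Type*} [Fintype ι] (κ : ℕ∞) (C : ℕ → Matrix ι ι ℂ) : Prop :=
  ∀ n : ℕ, (n : ℕ∞) ≤ κ → (blockToeplitz C n).PosSemidef

/-- `B` is the Moore–Penrose inverse of `A`: the four Penrose equations hold. -/
def IsMoorePenroseInv {m n : Type*} [Fintype m] [Fintype n]
    (A : Matrix m n ℂ) (B : Matrix n m ℂ) : Prop :=
  A * B * A = A ∧ B * A * B = B ∧ (A * B)ᴴ = A * B ∧ (B * A)ᴴ = B * A

open Classical in
/-- The Moore–Penrose inverse of a complex matrix (it always exists and is unique). -/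
noncomputable def mpinv {m n : Type*} [Fintype m] [Fintype n]
    (A : Matrix m n ℂ) : Matrix n m ℂ :=
  if h : ∃ B, IsMoorePenroseInv A B then h.choose else 0

/-- The block column `Y_m = col(C_1, …, C_m)`. -/
def Ymat {ι : Type*} (C : ℕ → Matrix ι ι ℂ) (m : ℕ) : Matrix (ι × Fin m) ι ℂ :=
  fun x b => C ((x.2 : ℕ) + 1) x.1 b

/-- The block row `Z_m = (C_m, C_{m-1}, …, C_1)`. -/
def Zmat {ι : Type*} (C : ℕ → Matrix ι ι ℂ) (m : ℕ) : Matrix ι (ι × Fin m) ℂ :=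
  fun a y => C (m - (y.2 : ℕ)) a y.1

/-- The centers `M_1 = 0`, `M_{m+1} = Z_m T_{m-1}⁺ Y_m` of the matrix balls. -/
noncomputable def Mseq {ι : Type*} [Fintype ι] (C : ℕ → Matrix ι ι ℂ) :
    ℕ → Matrix ι ι ℂ
  | 0 => 0
  | 1 => 0
  | (k + 2) => Zmat C (k + 1) * mpinv (blockToeplitz C k) * Ymat C (k + 1)

/-- A sequence `(C_j)_{j=0}^κ` is central of order `k` if `C_j = M_j` for all
`k ≤ j ≤ κ`. -/
def IsCentralOfOrder {ι : Type*} [Fintype ι] (κ : ℕ∞) (k : ℕ)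
    (C : ℕ → Matrix ι ι ℂ) : Prop :=
  ∀ j : ℕ, k ≤ j → (j : ℕ∞) ≤ κ → C j = Mseq C j


section MoorePenrose

variable {m n m' n' : Type*} [Fintype m] [Fintype n] [Fintype m'] [Fintype n']

theorem IsMoorePenroseInv.unique {A : Matrix m n ℂ} {B B' : Matrix n m ℂ}
    (h : IsMoorePenroseInv A B) (h' : IsMoorePenroseInv A B') : B = B' := by
  obtain ⟨h1, h2, h3, h4⟩ := h
  obtain ⟨h1', h2', h3', h4'⟩ := h'
  have hAB : A * B = A * B' := by
    calc A * B = (A * B' * A * B)ᴴ := by rw [h1', h3]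
      _ = (A * B)ᴴ * (A * B')ᴴ := by simp only [conjTranspose_mul, Matrix.mul_assoc]
      _ = A * B' := by rw [h3, h3', ← Matrix.mul_assoc, h1]
  have hBA : B * A = B' * A := by
    calc B * A = (B * (A * B' * A))ᴴ := by rw [h1', h4]
      _ = (B' * A)ᴴ * (B * A)ᴴ := by simp only [conjTranspose_mul, Matrix.mul_assoc]
      _ = B' * A := by rw [h4, h4', Matrix.mul_assoc, ← Matrix.mul_assoc A, h1]
  calc B = B * A * B := h2.symm
    _ = B' * A * B' := by rw [hBA, Matrix.mul_assoc, hAB, ← Matrix.mul_assoc]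
    _ = B' := h2'

theorem IsMoorePenroseInv.conjTranspose {A : Matrix m n ℂ} {B : Matrix n m ℂ}
    (h : IsMoorePenroseInv A B) : IsMoorePenroseInv Aᴴ Bᴴ := by
  obtain ⟨h1, h2, h3, h4⟩ := h
  refine ⟨?_, ?_, ?_, ?_⟩
  · simpa only [conjTranspose_mul, Matrix.mul_assoc] using congrArg (·ᴴ) h1
  · simpa only [conjTranspose_mul, Matrix.mul_assoc] using congrArg (·ᴴ) h2
  · simpa only [conjTranspose_mul, conjTranspose_conjTranspose] using h4.symm
  · simpa only [conjTranspose_mul, conjTranspose_conjTranspose] using h3.symm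

theorem Matrix.mul_eq_of_conjTranspose_mul_self_mul_eq {A : Matrix m n ℂ} {X : Matrix n n ℂ}
    (h : Aᴴ * A * X = Aᴴ * A) : A * X = A := by
  have hE : Aᴴ * (A * X - A) = 0 := by rw [Matrix.mul_sub, ← Matrix.mul_assoc, h, sub_self]
  have : (A * X - A)ᴴ * (A * X - A) = 0 := by
    rw [conjTranspose_sub, conjTranspose_mul, Matrix.sub_mul, Matrix.mul_assoc, hE,
      Matrix.mul_zero, sub_zero]
  exact sub_eq_zero.mp (conjTranspose_mul_self_eq_zero.mp this)

theorem IsMoorePenroseInv.of_conjTranspose_mul_self {A : Matrix m n ℂ} {G : Matrix n n ℂ}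
    (hG : IsMoorePenroseInv (Aᴴ * A) G) : IsMoorePenroseInv A (G * Aᴴ) := by
  have hGh : Gᴴ = G := by
    refine hG.conjTranspose.unique ?_
    simpa only [conjTranspose_mul, conjTranspose_conjTranspose] using hG
  obtain ⟨h1, h2, -, h4⟩ := hG
  refine ⟨?_, ?_, ?_, ?_⟩
  · rw [Matrix.mul_assoc, Matrix.mul_assoc]
    exact mul_eq_of_conjTranspose_mul_self_mul_eq (by rw [← Matrix.mul_assoc, h1])
  · rw [Matrix.mul_assoc G Aᴴ A, ← Matrix.mul_assoc _ G, h2]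
  · simp only [conjTranspose_mul, conjTranspose_conjTranspose, hGh, Matrix.mul_assoc]
  · rwa [Matrix.mul_assoc]

theorem isMoorePenroseInv_cfc [DecidableEq n] (A : Matrix n n ℂ) {f g : ℝ → ℝ}
    (hf : ∀ x, f x * g x * f x = f x) (hg : ∀ x, g x * f x * g x = g x) :
    IsMoorePenroseInv (cfc f A) (cfc g A) := by
  have hmul (f g : ℝ → ℝ) : cfc f A * cfc g A = cfc (fun x => f x * g x) A :=
    (cfc_mul f g A (A.finite_real_spectrum.continuousOn f)
      (A.finite_real_spectrum.continuousOn g)).symm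
  refine ⟨?_, ?_, ?_, ?_⟩
  · rw [hmul, hmul]
    exact cfc_congr fun x _ => hf x
  · rw [hmul, hmul]
    exact cfc_congr fun x _ => hg x
  · rw [hmul]
    exact IsSelfAdjoint.star_eq (cfc_predicate _ A)
  · rw [hmul]
    exact IsSelfAdjoint.star_eq (cfc_predicate _ A)

theorem Matrix.IsHermitian.isMoorePenroseInv_cfc_inv [DecidableEq n] {A : Matrix n n ℂ}
    (hA : A.IsHermitian) : IsMoorePenroseInv A (cfc (·⁻¹ : ℝ → ℝ) A) := by
  have h := isMoorePenroseInv_cfc A (f := fun x => x) (g := (·⁻¹)) mul_inv_mul_cancel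
    fun x => by simpa only [inv_inv] using mul_inv_mul_cancel x⁻¹
  convert h using 1
  exact (cfc_id' ℝ A hA).symm

theorem exists_isMoorePenroseInv (A : Matrix m n ℂ) : ∃ B, IsMoorePenroseInv A B := by
  classical
  exact ⟨_, (isHermitian_conjTranspose_mul_self A).isMoorePenroseInv_cfc_inv
    |>.of_conjTranspose_mul_self⟩

theorem isMoorePenroseInv_mpinv (A : Matrix m n ℂ) : IsMoorePenroseInv A (mpinv A) := by
  rw [mpinv, dif_pos (exists_isMoorePenroseInv A)]
  exact (exists_isMoorePenroseInv A).choose_spec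

theorem IsMoorePenroseInv.mpinv_eq {A : Matrix m n ℂ} {B : Matrix n m ℂ}
    (h : IsMoorePenroseInv A B) : mpinv A = B :=
  (isMoorePenroseInv_mpinv A).unique h

theorem IsMoorePenroseInv.fromBlocks {A : Matrix m n ℂ} {B : Matrix n m ℂ} {A' : Matrix m' n' ℂ}
    {B' : Matrix n' m' ℂ} (h : IsMoorePenroseInv A B) (h' : IsMoorePenroseInv A' B') :
    IsMoorePenroseInv (fromBlocks A 0 0 A') (fromBlocks B 0 0 B') := by
  obtain ⟨h1, h2, h3, h4⟩ := h
  obtain ⟨h1', h2', h3', h4'⟩ := h'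
  refine ⟨?_, ?_, ?_, ?_⟩ <;>
    simp [fromBlocks_multiply, fromBlocks_conjTranspose, h1, h2, h3, h4, h1', h2', h3', h4']

theorem IsMoorePenroseInv.submatrix {A : Matrix m n ℂ} {B : Matrix n m ℂ} (e : m' ≃ m)
    (f : n' ≃ n) (h : IsMoorePenroseInv A B) :
    IsMoorePenroseInv (A.submatrix e f) (B.submatrix f e) := by
  obtain ⟨h1, h2, h3, h4⟩ := h
  refine ⟨?_, ?_, ?_, ?_⟩
  · rw [submatrix_mul_equiv, submatrix_mul_equiv, h1]
  · rw [submatrix_mul_equiv, submatrix_mul_equiv, h2]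
  · rw [submatrix_mul_equiv, conjTranspose_submatrix, h3]
  · rw [submatrix_mul_equiv, conjTranspose_submatrix, h4]

theorem mpinv_fromBlocks (A : Matrix m n ℂ) (A' : Matrix m' n' ℂ) :
    mpinv (fromBlocks A 0 0 A') = fromBlocks (mpinv A) 0 0 (mpinv A') :=
  ((isMoorePenroseInv_mpinv A).fromBlocks (isMoorePenroseInv_mpinv A')).mpinv_eq

theorem mpinv_submatrix (A : Matrix m n ℂ) (e : m' ≃ m) (f : n' ≃ n) :
    mpinv (A.submatrix e f) = (mpinv A).submatrix f e :=
  ((isMoorePenroseInv_mpinv A).submatrix e f).mpinv_eq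

end MoorePenrose

section BlockDiagonalSequence

variable {ι ι' : Type*} (C : ℕ → Matrix ι ι ℂ) (D : ℕ → Matrix ι' ι' ℂ)

theorem blockToeplitz_fromBlocks (n : ℕ) :
    blockToeplitz (fun j => fromBlocks (C j) 0 0 (D j)) n =
      (fromBlocks (blockToeplitz C n) 0 0 (blockToeplitz D n)).submatrix
        (Equiv.sumProdDistrib ι ι' _) (Equiv.sumProdDistrib ι ι' _) := by
  ext ⟨x | x, j⟩ ⟨y | y, k⟩ <;> by_cases hjk : (k : ℕ) ≤ j <;> simp [blockToeplitz, hjk]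

theorem Ymat_fromBlocks (m : ℕ) :
    Ymat (fun j => fromBlocks (C j) 0 0 (D j)) m =
      (fromBlocks (Ymat C m) 0 0 (Ymat D m)).submatrix (Equiv.sumProdDistrib ι ι' _) id := by
  ext ⟨x | x, j⟩ (y | y) <;> simp [Ymat]

theorem Zmat_fromBlocks (m : ℕ) :
    Zmat (fun j => fromBlocks (C j) 0 0 (D j)) m =
      (fromBlocks (Zmat C m) 0 0 (Zmat D m)).submatrix id (Equiv.sumProdDistrib ι ι' _) := by
  ext (x | x) ⟨y | y, j⟩ <;> simp [Zmat]

theorem Mseq_fromBlocks [Fintype ι] [Fintype ι'] (j : ℕ) :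
    Mseq (fun i => fromBlocks (C i) 0 0 (D i)) j = fromBlocks (Mseq C j) 0 0 (Mseq D j) := by
  match j with
  | 0 | 1 => exact fromBlocks_zero.symm
  | k + 2 =>
    simp [Mseq, blockToeplitz_fromBlocks, Ymat_fromBlocks, Zmat_fromBlocks, mpinv_submatrix,
      mpinv_fromBlocks, submatrix_mul_equiv, fromBlocks_multiply]

end BlockDiagonalSequence

theorem isCentralOfOrder_fromBlocks_general (p q : ℕ) (κ : ℕ∞) (k l : ℕ)
    (C : ℕ → Matrix (Fin q) (Fin q) ℂ) (D : ℕ → Matrix (Fin p) (Fin p) ℂ)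
    (hC : IsCentralOfOrder κ k C) (hD : IsCentralOfOrder κ l D) :
    IsCentralOfOrder κ (max k l) (fun j => Matrix.fromBlocks (C j) 0 0 (D j)) := by
  intro j hj hjκ
  rw [Mseq_fromBlocks, ← hC j (le_of_max_le_left hj) hjκ, ← hD j (le_of_max_le_right hj) hjκ]

/-- The block diagonal sum of a sequence central of order `k` and a sequence central
of order `ℓ` is central of order `max k ℓ`. -/
theorem isCentralOfOrder_fromBlocks (p q : ℕ) (κ : ℕ∞) (k l : ℕ)
    (hk1 : 1 ≤ k) (hkκ : (k : ℕ∞) ≤ κ) (hl1 : 1 ≤ l) (hlκ : (l : ℕ∞) ≤ κ)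
    (C : ℕ → Matrix (Fin q) (Fin q) ℂ) (D : ℕ → Matrix (Fin p) (Fin p) ℂ)
    (hC : IsCentralOfOrder κ k C) (hD : IsCentralOfOrder κ l D) :
    IsCentralOfOrder κ (max k l) (fun j => Matrix.fromBlocks (C j) 0 0 (D j)) :=
  isCentralOfOrder_fromBlocks_general p q κ k l C D hC hD
end
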